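/- Let W : ℂ^{d_A} → ℂ^{M} be an isometry (W†W = 1_A), U ∈ U(M) a unitary, {|z⟩}_{z=1}^{M} an orthonormal basis of ℂ^{M}, and c_1, …, c_M complex numbers with |c_z| ≤ 1 for all z. Define G_z := (1/d_A)(W W† U† |z⟩⟨z| − |z⟩⟨z| U W W†). Then ‖Σ_{z=1}^{M} c_z G_z‖₂ ≤ 2/√d_A, where ‖·‖₂ is the Hilbert–Schmidt (Frobenius) norm. -/

import Mathlib

/- Common definitions: trace norm, trace distance, Kronecker powers, outer products,
post-measurement ensembles, row ensembles of isometries, and Haar moment operators. -/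

open scoped BigOperators ComplexConjugate ComplexOrder
open MeasureTheory Matrix

noncomputable section

instance {m n : Type*} : MeasurableSpace (Matrix m n ℂ) := borel _
instance {m n : Type*} : BorelSpace (Matrix m n ℂ) := ⟨rfl⟩

/-- The trace norm (Schatten 1-norm) `‖A‖₁ = Tr[√(AᴴA)]`. -/
def traceNorm {n : Type*} [Fintype n] [DecidableEq n] (A : Matrix n n ℂ) : ℝ :=
  (((Matrix.posSemidef_conjTranspose_mul_self A).1.eigenvectorUnitary : Matrix n n ℂ) *
    diagonal (((↑) : ℝ → ℂ) ∘ Real.sqrt ∘ (Matrix.posSemidef_conjTranspose_mul_self A).1.eigenvalues) *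
    (star (Matrix.posSemidef_conjTranspose_mul_self A).1.eigenvectorUnitary : Matrix n n ℂ)).trace.re

/-- The trace distance `D(A,B) = ‖A - B‖₁ / 2`. -/
def traceDist {n : Type*} [Fintype n] [DecidableEq n] (A B : Matrix n n ℂ) : ℝ :=
  traceNorm (A - B) / 2

/-- The Hilbert-Schmidt (Frobenius) norm `‖A‖₂ = √(Tr[AᴴA])`. -/
def hsNorm {m n : Type*} [Fintype m] [Fintype n] (A : Matrix m n ℂ) : ℝ :=
  Real.sqrt ((Aᴴ * A).trace).re

/-- The `k`-fold tensor (Kronecker) power of a matrix on `ℂ^d`,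
as an operator on `(ℂ^d)^{⊗ k}`. -/
def tpow {d : ℕ} (ρ : Matrix (Fin d) (Fin d) ℂ) (k : ℕ) :
    Matrix (Fin k → Fin d) (Fin k → Fin d) ℂ :=
  Matrix.of fun x y => ∏ i, ρ (x i) (y i)

/-- The tensor product `ρ^{⊗ l} ⊗ A ⊗ ρ^{⊗ (k - (l+1))}` on `(ℂ^d)^{⊗ k}`,
with `A` inserted at position `l`. -/
def tpowIns {d : ℕ} (ρ A : Matrix (Fin d) (Fin d) ℂ) (k l : ℕ) :
    Matrix (Fin k → Fin d) (Fin k → Fin d) ℂ :=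
  Matrix.of fun x y => ∏ i : Fin k, if (i : ℕ) = l then A (x i) (y i) else ρ (x i) (y i)

/-- The outer product (rank-one projection for a unit vector) `|v⟩⟨v|`. -/
def outer {d : ℕ} (v : Fin d → ℂ) : Matrix (Fin d) (Fin d) ℂ :=
  Matrix.of fun i j => v i * star (v j)

/-- Squared Euclidean norm of a vector in `ℂ^d`. -/
def nsq {d : ℕ} (v : Fin d → ℂ) : ℝ := ∑ i, Complex.normSq (v i)

/-- Euclidean norm of a vector in `ℂ^d`. -/
def l2norm {d : ℕ} (v : Fin d → ℂ) : ℝ := Real.sqrt (nsq v)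

/-- The normalization `v / ‖v‖` of a vector. -/
def normalizeVec {d : ℕ} (v : Fin d → ℂ) : Fin d → ℂ :=
  fun i => v i / (Real.sqrt (nsq v) : ℂ)

/-- For an unnormalized vector `v` with weight `p = ‖v‖²`, the contribution
`p (|v/‖v‖⟩⟨v/‖v‖|)^{⊗ k}` to a `k`-th moment operator (zero when `v = 0`,
i.e. the ensemble member occurs with probability zero). -/
def momentTerm {d : ℕ} (v : Fin d → ℂ) (k : ℕ) :
    Matrix (Fin k → Fin d) (Fin k → Fin d) ℂ :=
  if v = 0 then 0 else ((nsq v : ℝ) : ℂ) • tpow (outer (normalizeVec v)) k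

/-- The `k`-th moment operator `∑_{z : v_z ≠ 0} p_z (|ψ_z⟩⟨ψ_z|)^{⊗ k}` of the row ensemble
induced by `V : ℂ^{d_A} → ℂ^M` with respect to the orthonormal basis `e` of `ℂ^M`:
`⟨v_z| := ⟨z|V`, `|ψ_z⟩ := |v_z⟩/‖v_z‖`, `p_z := ‖v_z‖²/d_A`. -/
def rowMoment {dA M : ℕ} (V : Matrix (Fin M) (Fin dA) ℂ) (e : Fin M → Fin M → ℂ) (k : ℕ) :
    Matrix (Fin k → Fin dA) (Fin k → Fin dA) ℂ :=
  ((dA : ℂ))⁻¹ • ∑ z, momentTerm (fun j => star (Matrix.vecMul (star (e z)) V j)) k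

/-- The `k`-th moment operator `∑_{z : p_z > 0} p_z (|ψ_z⟩⟨ψ_z|)^{⊗ k}` of the
post-measurement ensemble of the pure state `Ψ ∈ ℂ^{d_A} ⊗ ℂ^M` measured on the second
factor in the orthonormal basis `b`: `p_z := ⟨Ψ|(1 ⊗ |b_z⟩⟨b_z|)|Ψ⟩` and
`|ψ_z⟩ := (1 ⊗ ⟨b_z|)|Ψ⟩ / √p_z`. -/
def postMoment {dA M : ℕ} (Ψ : Fin dA × Fin M → ℂ) (b : Fin M → (Fin M → ℂ)) (k : ℕ) :
    Matrix (Fin k → Fin dA) (Fin k → Fin dA) ℂ :=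
  ∑ z, momentTerm (fun i => dotProduct (star (b z)) (fun w => Ψ (i, w))) k

/-- The `k`-th Haar moment operator `∫ (U|e₁⟩⟨e₁|Uᴴ)^{⊗ k} dU` on `(ℂ^d)^{⊗ k}`,
where `ν` is the (normalized) Haar measure on the unitary group `U(d)`. -/
def haarMoment {d : ℕ} [NeZero d] (ν : Measure (Matrix.unitaryGroup (Fin d) ℂ)) (k : ℕ) :
    Matrix (Fin k → Fin d) (Fin k → Fin d) ℂ :=
  Matrix.of fun x y =>
    ∫ U, (∏ i, ((U : Matrix (Fin d) (Fin d) ℂ) (x i) 0 *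
      star ((U : Matrix (Fin d) (Fin d) ℂ) (y i) 0))) ∂ν

section Aux
attribute [local instance] Matrix.frobeniusSeminormedAddCommGroup Matrix.frobeniusNormedSpace

lemma hsNorm_eq_norm {m n : Type*} [Fintype m] [Fintype n] (A : Matrix m n ℂ) :
    hsNorm A = ‖A‖ := by
  rw [Matrix.frobenius_norm_def, hsNorm, Real.sqrt_eq_rpow]
  congr 1
  rw [Matrix.trace, Complex.re_sum, Finset.sum_comm]
  refine Finset.sum_congr rfl fun i _ => ?_
  rw [Matrix.diag_apply, Matrix.mul_apply, Complex.re_sum]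
  refine Finset.sum_congr rfl fun j _ => ?_
  simp [Matrix.conjTranspose_apply, Complex.star_def, mul_comm, Complex.mul_conj,
    Complex.sq_norm]

lemma hsNorm_sub_le {m n : Type*} [Fintype m] [Fintype n] (A B : Matrix m n ℂ) :
    hsNorm (A - B) ≤ hsNorm A + hsNorm B := by
  simp only [hsNorm_eq_norm]; exact norm_sub_le A B

lemma hsNorm_smul {m n : Type*} [Fintype m] [Fintype n] (a : ℂ) (A : Matrix m n ℂ) :
    hsNorm (a • A) = ‖a‖ * hsNorm A := by
  simp only [hsNorm_eq_norm]; exact norm_smul a A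

lemma hsNorm_conjTranspose {m n : Type*} [Fintype m] [Fintype n] (A : Matrix m n ℂ) :
    hsNorm Aᴴ = hsNorm A := by
  simp only [hsNorm_eq_norm]; exact Matrix.frobenius_norm_conjTranspose A

end Aux

lemma outer_conjTranspose {d : ℕ} (v : Fin d → ℂ) : (outer v)ᴴ = outer v := by
  ext i j; simp [outer, Matrix.conjTranspose_apply, mul_comm]

lemma trace_outer_mul {d : ℕ} (v : Fin d → ℂ) (C : Matrix (Fin d) (Fin d) ℂ) :
    (outer v * C).trace = star v ⬝ᵥ (C *ᵥ v) := by
  simp only [Matrix.trace, Matrix.diag_apply, Matrix.mul_apply, outer, Matrix.of_apply,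
    dotProduct, Matrix.mulVec, Pi.star_apply]
  rw [Finset.sum_comm]
  refine Finset.sum_congr rfl fun j _ => ?_
  rw [Finset.mul_sum]
  refine Finset.sum_congr rfl fun i _ => ?_
  ring

lemma outer_mul_outer {d : ℕ} (u v : Fin d → ℂ) :
    outer u * outer v = (star u ⬝ᵥ v) • Matrix.of (fun i j => u i * star (v j)) := by
  ext i j
  simp only [Matrix.mul_apply, outer, Matrix.of_apply, Matrix.smul_apply, dotProduct,
    Pi.star_apply, smul_eq_mul, Finset.sum_mul]
  refine Finset.sum_congr rfl fun k _ => ?_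
  ring

lemma sum_outer_eq_one {M : ℕ} (e : Fin M → Fin M → ℂ)
    (he : ∀ z w, dotProduct (star (e z)) (e w) = if z = w then 1 else 0) :
    ∑ z, outer (e z) = 1 := by
  set E : Matrix (Fin M) (Fin M) ℂ := Matrix.of fun i z => e z i with hE
  have h1 : Eᴴ * E = 1 := by
    ext z w
    simpa [Matrix.mul_apply, Matrix.one_apply, hE, dotProduct, Matrix.conjTranspose_apply]
      using he z w
  have h2 : E * Eᴴ = 1 := mul_eq_one_comm.mp h1
  calc ∑ z, outer (e z) = E * Eᴴ := by
        ext i j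
        simp [Matrix.sum_apply, outer, Matrix.mul_apply, hE, Matrix.conjTranspose_apply]
    _ = 1 := h2

lemma star_dot_BBH {M dA : ℕ} (B : Matrix (Fin M) (Fin dA) ℂ) (v : Fin M → ℂ) :
    star v ⬝ᵥ ((B * Bᴴ) *ᵥ v) = ((∑ k, Complex.normSq ((Bᴴ *ᵥ v) k) : ℝ) : ℂ) := by
  rw [← Matrix.mulVec_mulVec, Matrix.dotProduct_mulVec]
  have h : star v ᵥ* B = star (Bᴴ *ᵥ v) := by
    rw [Matrix.star_mulVec, Matrix.conjTranspose_conjTranspose]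
  rw [h]
  simp only [dotProduct, Pi.star_apply, Complex.star_def]
  push_cast
  refine Finset.sum_congr rfl fun k _ => ?_
  rw [mul_comm, Complex.mul_conj]

lemma key_bound {dA M : ℕ}
    (W : Matrix (Fin M) (Fin dA) ℂ) (hW : Wᴴ * W = 1)
    (U : Matrix (Fin M) (Fin M) ℂ) (hU : U ∈ Matrix.unitaryGroup (Fin M) ℂ)
    (e : Fin M → Fin M → ℂ)
    (he : ∀ z w, dotProduct (star (e z)) (e w) = if z = w then 1 else 0)
    (c : Fin M → ℂ) (hc : ∀ z, ‖c z‖ ≤ 1) :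
    hsNorm (W * Wᴴ * Uᴴ * ∑ z, c z • outer (e z)) ≤ Real.sqrt dA := by
  set D : Matrix (Fin M) (Fin M) ℂ := ∑ z, c z • outer (e z) with hD
  -- the Gram matrix
  have hXHX : (W * Wᴴ * Uᴴ * D)ᴴ * (W * Wᴴ * Uᴴ * D)
      = Dᴴ * ((U * W) * (U * W)ᴴ) * D := by
    simp only [Matrix.conjTranspose_mul, Matrix.conjTranspose_conjTranspose, Matrix.mul_assoc]
    rw [← Matrix.mul_assoc Wᴴ W (Wᴴ * (Uᴴ * D)), hW, Matrix.one_mul]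
  -- D * Dᴴ
  have hDH : Dᴴ = ∑ z, (starRingEnd ℂ) (c z) • outer (e z) := by
    rw [hD, Matrix.conjTranspose_sum]
    refine Finset.sum_congr rfl fun z _ => ?_
    rw [Matrix.conjTranspose_smul, outer_conjTranspose, Complex.star_def]
  have hDD : D * Dᴴ = ∑ z, ((Complex.normSq (c z) : ℝ) : ℂ) • outer (e z) := by
    rw [hD, hDH, Finset.sum_mul_sum]
    refine Finset.sum_congr rfl fun z _ => ?_
    rw [Finset.sum_eq_single z]
    · rw [Matrix.smul_mul, Matrix.mul_smul, outer_mul_outer, he z z, if_pos rfl, one_smul,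
        smul_smul, mul_comm (c z) ((starRingEnd ℂ) (c z)),
        mul_comm ((starRingEnd ℂ) (c z)) (c z), Complex.mul_conj]
      rfl
    · intro w _ hw
      rw [Matrix.smul_mul, Matrix.mul_smul, outer_mul_outer, he z w, if_neg (by simpa using Ne.symm hw),
        zero_smul, smul_zero, smul_zero]
    · intro h; exact absurd (Finset.mem_univ z) h
  -- the real weights
  set r : Fin M → ℝ := fun z => ∑ k, Complex.normSq (((U * W)ᴴ *ᵥ e z) k) with hr
  have htr : ((W * Wᴴ * Uᴴ * D)ᴴ * (W * Wᴴ * Uᴴ * D)).trace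
      = ∑ z, ((Complex.normSq (c z) : ℝ) : ℂ) * ((r z : ℝ) : ℂ) := by
    rw [hXHX, Matrix.trace_mul_cycle, hDD, ← Matrix.mul_assoc, Matrix.sum_mul,
      Matrix.sum_mul, Matrix.trace_sum]
    refine Finset.sum_congr rfl fun z _ => ?_
    rw [Matrix.smul_mul, Matrix.smul_mul, Matrix.trace_smul, Matrix.mul_assoc,
      trace_outer_mul, star_dot_BBH]
    rfl
  -- sum of weights is dA
  have hsum : ∑ z, r z = (dA : ℝ) := by
    have h1 : ∑ z, ((r z : ℝ) : ℂ) = (dA : ℂ) := by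
      have h2 : ∀ z, ((r z : ℝ) : ℂ) = (outer (e z) * ((U * W) * (U * W)ᴴ)).trace := by
        intro z; rw [trace_outer_mul, star_dot_BBH]
      simp only [h2]
      rw [← Matrix.trace_sum, ← Matrix.sum_mul, sum_outer_eq_one e he, Matrix.one_mul,
        Matrix.trace_mul_comm]
      have hBB : (U * W)ᴴ * (U * W) = 1 := by
        rw [Matrix.conjTranspose_mul, Matrix.mul_assoc, ← Matrix.mul_assoc Uᴴ U,
          ← Matrix.star_eq_conjTranspose U, hU.1, Matrix.one_mul, hW]
      rw [hBB, Matrix.trace_one]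
      simp
    have h3 := congrArg Complex.re h1
    rw [Complex.re_sum] at h3
    simpa using h3
  have hrnn : ∀ z, 0 ≤ r z := fun z => Finset.sum_nonneg fun k _ => Complex.normSq_nonneg _
  -- real part bound
  have hre : (((W * Wᴴ * Uᴴ * D)ᴴ * (W * Wᴴ * Uᴴ * D)).trace).re ≤ (dA : ℝ) := by
    rw [htr]
    have h4 : ∀ z : Fin M, (((Complex.normSq (c z) : ℝ) : ℂ) * ((r z : ℝ) : ℂ)) =
        (((Complex.normSq (c z) * r z : ℝ)) : ℂ) := by intro z; push_cast; ring
    simp only [h4]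
    rw [Complex.re_sum]
    simp only [Complex.ofReal_re]
    rw [← hsum]
    refine Finset.sum_le_sum fun z _ => ?_
    have h1 : Complex.normSq (c z) ≤ 1 := by
      have := hc z
      rw [Complex.normSq_eq_norm_sq]
      nlinarith [norm_nonneg (c z)]
    nlinarith [hrnn z]
  exact Real.sqrt_le_sqrt hre

/-- for an isometry `W : ℂ^{d_A} → ℂ^M`, a unitary `U ∈ U(M)`, an orthonormal
basis `{|z⟩}` of `ℂ^M` and complex numbers `c_z` with `|c_z| ≤ 1`, the gradients
`G_z = (1/d_A)(W W† U† |z⟩⟨z| − |z⟩⟨z| U W W†)` satisfy `‖∑_z c_z G_z‖₂ ≤ 2/√d_A`. -/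
theorem hsNorm_gradient_sum_le {dA M : ℕ} [NeZero dA]
    (W : Matrix (Fin M) (Fin dA) ℂ) (hW : Wᴴ * W = 1)
    (U : Matrix (Fin M) (Fin M) ℂ) (hU : U ∈ Matrix.unitaryGroup (Fin M) ℂ)
    (e : Fin M → Fin M → ℂ)
    (he : ∀ z w, dotProduct (star (e z)) (e w) = if z = w then 1 else 0)
    (c : Fin M → ℂ) (hc : ∀ z, ‖c z‖ ≤ 1) :
    hsNorm (∑ z, c z • ((dA : ℂ)⁻¹ •
        (W * Wᴴ * Uᴴ * outer (e z) - outer (e z) * U * W * Wᴴ)))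
      ≤ 2 / Real.sqrt dA := by
  have hd : (0:ℝ) < (dA : ℝ) := by exact_mod_cast Nat.pos_of_ne_zero (NeZero.ne dA)
  set D : Matrix (Fin M) (Fin M) ℂ := ∑ z, c z • outer (e z) with hD
  have hDH : Dᴴ = ∑ z, (starRingEnd ℂ) (c z) • outer (e z) := by
    rw [hD, Matrix.conjTranspose_sum]
    refine Finset.sum_congr rfl fun z _ => ?_
    rw [Matrix.conjTranspose_smul, outer_conjTranspose, Complex.star_def]
  have hrw : (∑ z, c z • ((dA : ℂ)⁻¹ •
        (W * Wᴴ * Uᴴ * outer (e z) - outer (e z) * U * W * Wᴴ)))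
      = (dA : ℂ)⁻¹ • (W * Wᴴ * Uᴴ * D - D * U * W * Wᴴ) := by
    have h0 : ∀ z, c z • ((dA : ℂ)⁻¹ •
        (W * Wᴴ * Uᴴ * outer (e z) - outer (e z) * U * W * Wᴴ))
        = (dA : ℂ)⁻¹ • (c z • (W * Wᴴ * Uᴴ * outer (e z))
            - c z • (outer (e z) * U * W * Wᴴ)) := by
      intro z; rw [smul_comm, smul_sub]
    simp only [h0]
    rw [← Finset.smul_sum, Finset.sum_sub_distrib]
    congr 1
    congr 1
    · rw [hD, Matrix.mul_sum]
      refine Finset.sum_congr rfl fun z _ => ?_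
      rw [Matrix.mul_smul]
    · rw [hD, Matrix.sum_mul, Matrix.sum_mul, Matrix.sum_mul]
      refine Finset.sum_congr rfl fun z _ => ?_
      rw [Matrix.smul_mul, Matrix.smul_mul, Matrix.smul_mul]
  rw [hrw, hsNorm_smul]
  have h1 : hsNorm (W * Wᴴ * Uᴴ * D) ≤ Real.sqrt dA := key_bound W hW U hU e he c hc
  have h2 : hsNorm (D * U * W * Wᴴ) ≤ Real.sqrt dA := by
    rw [← hsNorm_conjTranspose]
    have hT : (D * U * W * Wᴴ)ᴴ
        = W * Wᴴ * Uᴴ * (∑ z, (starRingEnd ℂ) (c z) • outer (e z)) := by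
      rw [← hDH]
      simp only [Matrix.conjTranspose_mul, Matrix.conjTranspose_conjTranspose, Matrix.mul_assoc]
    rw [hT]
    exact key_bound W hW U hU e he (fun z => (starRingEnd ℂ) (c z))
      (fun z => by rw [Complex.norm_conj]; exact hc z)
  have h3 : hsNorm (W * Wᴴ * Uᴴ * D - D * U * W * Wᴴ)
      ≤ Real.sqrt dA + Real.sqrt dA := le_trans (hsNorm_sub_le _ _) (add_le_add h1 h2)
  have h4 : ‖((dA : ℂ))⁻¹‖ = (dA : ℝ)⁻¹ := by
    rw [norm_inv]; norm_num
  rw [h4]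
  calc (dA : ℝ)⁻¹ * hsNorm (W * Wᴴ * Uᴴ * D - D * U * W * Wᴴ)
      ≤ (dA : ℝ)⁻¹ * (Real.sqrt dA + Real.sqrt dA) := by
        exact mul_le_mul_of_nonneg_left h3 (by positivity)
    _ = 2 / Real.sqrt dA := by
        have hs : Real.sqrt dA * Real.sqrt dA = (dA : ℝ) := Real.mul_self_sqrt hd.le
        have hsne : Real.sqrt (dA : ℝ) ≠ 0 := by positivity
        field_simp
        nlinarith [hs]
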